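/- arXiv:math/0306438 — 2 statements merged into one kernel-verified Lean document; each statement's English description precedes it below -/
import Mathlib

section
/- Let G be an abelian group and h : G → ℝ a function such that there exists a constant C with |h(x + y) + h(x - y) - 2h(x) - 2h(y)| ≤ C for all x, y ∈ G. Then the limit ĥ(x) := lim_{n→∞} h(2^n x)/4^n exists for every x ∈ G. -/
/-!
Doubling multiplies `h` by `4` up to the bounded error `C + |h 0|` (take `x = y` in the
quasi-parallelogram law), so consecutive terms of `h (2 ^ n • x) / 4 ^ n` differ by
`O(4⁻ⁿ)` and the sequence is Cauchy.
-/

open Filter Topology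

theorem exists_tendsto_div_pow_of_abs_succ_sub_mul_le {a : ℕ → ℝ} {r D : ℝ} (hr : 1 < r)
    (ha : ∀ n, |a (n + 1) - r * a n| ≤ D) :
    ∃ l, Tendsto (fun n => a n / r ^ n) atTop (𝓝 l) := by
  have hr0 : 0 < r := one_pos.trans hr
  refine cauchySeq_tendsto_of_complete <|
    cauchySeq_of_le_geometric r⁻¹ (D / r) (inv_lt_one_of_one_lt₀ hr) fun n => ?_
  have hstep : a n / r ^ n - a (n + 1) / r ^ (n + 1) = -(a (n + 1) - r * a n) / r ^ (n + 1) := by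
    field_simp
    ring
  calc dist (a n / r ^ n) (a (n + 1) / r ^ (n + 1))
      = |a (n + 1) - r * a n| / r ^ (n + 1) := by
        rw [Real.dist_eq, hstep, abs_div, abs_neg, abs_of_pos (pow_pos hr0 _)]
    _ ≤ D / r ^ (n + 1) := by gcongr; exact ha n
    _ = D / r * r⁻¹ ^ n := by rw [pow_succ, inv_pow]; field_simp

theorem abs_apply_add_self_sub_four_mul_le {G : Type*} [AddGroup G] {h : G → ℝ} {C : ℝ}
    (hq : ∀ x y : G, |h (x + y) + h (x - y) - 2 * h x - 2 * h y| ≤ C) (z : G) :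
    |h (z + z) - 4 * h z| ≤ C + |h 0| := by
  have hzz := hq z z
  rw [sub_self] at hzz
  calc |h (z + z) - 4 * h z| = |(h (z + z) + h 0 - 2 * h z - 2 * h z) + -h 0| := by ring_nf
    _ ≤ |h (z + z) + h 0 - 2 * h z - 2 * h z| + |-h 0| := abs_add_le _ _
    _ ≤ C + |h 0| := by rw [abs_neg]; gcongr

/-- Tate's limiting process: if `h` satisfies a quasi-parallelogram law, then
`lim_{n→∞} h(2^n x)/4^n` exists for every `x`. -/
theorem stmt_0 {G : Type*} [AddCommGroup G] (h : G → ℝ) (C : ℝ)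
    (hq : ∀ x y : G, |h (x + y) + h (x - y) - 2 * h x - 2 * h y| ≤ C) :
    ∀ x : G, ∃ l : ℝ,
      Filter.Tendsto (fun n : ℕ => h ((2 ^ n : ℕ) • x) / (4 : ℝ) ^ n)
        Filter.atTop (nhds l) := by
  intro x
  refine exists_tendsto_div_pow_of_abs_succ_sub_mul_le (a := fun n => h ((2 ^ n : ℕ) • x))
    (D := C + |h 0|) (by norm_num) fun n => ?_
  rw [pow_succ, mul_two, add_nsmul]
  exact abs_apply_add_self_sub_four_mul_le hq _
end

section
/- Let G be an abelian group and h : G → ℝ satisfy the quasi-parallelogram law |h(x + y) + h(x - y) - 2h(x) - 2h(y)| ≤ C. Then the canonical height ĥ(x) := lim_{n→∞} h(2^n x)/4^n satisfies the exact parallelogram law: ĥ(x + y) + ĥ(x - y) = 2ĥ(x) + 2ĥ(y) for all x, y ∈ G. -/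
/-!
Rescaling by `2ⁿ` multiplies the parallelogram defect of `h` by `4ⁿ` at the argument, so the defect
of `x ↦ h (2ⁿ • x) / 4ⁿ` is bounded by `C / 4ⁿ`. The defect is continuous under pointwise limits,
hence the defect of the canonical height is a limit of terms tending to `0`.
-/

open Filter Topology

section ParallelogramDefect

variable {G : Type*} [AddCommGroup G]

def parallelogramDefect (h : G → ℝ) (x y : G) : ℝ :=
  h (x + y) + h (x - y) - 2 * h x - 2 * h y

lemma parallelogramDefect_rescale (h : G → ℝ) (n : ℕ) (c : ℝ) (x y : G) :
    parallelogramDefect (fun z => h (n • z) / c) x y = parallelogramDefect h (n • x) (n • y) / c := by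
  simp only [parallelogramDefect, smul_add, smul_sub]
  ring

lemma tendsto_parallelogramDefect {ι : Type*} {l : Filter ι} {F : ι → G → ℝ} {f : G → ℝ}
    (hF : ∀ z, Tendsto (fun i => F i z) l (𝓝 (f z))) (x y : G) :
    Tendsto (fun i => parallelogramDefect (F i) x y) l (𝓝 (parallelogramDefect f x y)) :=
  (((hF (x + y)).add (hF (x - y))).sub ((hF x).const_mul 2)).sub ((hF y).const_mul 2)

lemma parallelogramDefect_eq_zero_of_tendsto {ι : Type*} {l : Filter ι} [l.NeBot]
    {F : ι → G → ℝ} {f : G → ℝ} (hF : ∀ z, Tendsto (fun i => F i z) l (𝓝 (f z)))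
    {ε : ι → ℝ} (hε : Tendsto ε l (𝓝 0)) (hbound : ∀ i x y, |parallelogramDefect (F i) x y| ≤ ε i)
    (x y : G) : parallelogramDefect f x y = 0 :=
  tendsto_nhds_unique (tendsto_parallelogramDefect hF x y)
    (squeeze_zero_norm (fun i => hbound i x y) hε)

end ParallelogramDefect

/-- The canonical height obtained by Tate's limiting process satisfies the
exact parallelogram law. -/
theorem stmt_2 {G : Type*} [AddCommGroup G] (h : G → ℝ) (C : ℝ)
    (hq : ∀ x y : G, |h (x + y) + h (x - y) - 2 * h x - 2 * h y| ≤ C)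
    (hhat : G → ℝ)
    (hlim : ∀ x : G,
      Filter.Tendsto (fun n : ℕ => h ((2 ^ n : ℕ) • x) / (4 : ℝ) ^ n)
        Filter.atTop (nhds (hhat x))) :
    ∀ x y : G, hhat (x + y) + hhat (x - y) = 2 * hhat x + 2 * hhat y := by
  have hbound : ∀ (n : ℕ) (x y : G),
      |parallelogramDefect (fun z => h ((2 ^ n : ℕ) • z) / (4 : ℝ) ^ n) x y| ≤ C / 4 ^ n := by
    intro n x y
    have h4 : (0 : ℝ) < 4 ^ n := by positivity
    rw [parallelogramDefect_rescale, abs_div, abs_of_pos h4]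
    exact div_le_div_of_nonneg_right (hq _ _) h4.le
  have hε : Tendsto (fun n : ℕ => C / (4 : ℝ) ^ n) atTop (𝓝 0) :=
    tendsto_const_nhds.div_atTop (tendsto_pow_atTop_atTop_of_one_lt (by norm_num))
  intro x y
  have := parallelogramDefect_eq_zero_of_tendsto hlim hε hbound x y
  rw [parallelogramDefect] at this
  linarith
end
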